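/- Let C > 0, χ ∈ (0,2], and let X : ℝ → Ω → ℝ be a stochastic process on a probability space (Ω, ℙ). Let a = t₀ < t₁ < ⋯ < t_n = b be a partition such that the increments X_{t_i} − X_{t_{i−1}}, i = 1,…,n, are (mutually) independent and, for each i, the characteristic function of X_{t_i} − X_{t_{i−1}} is x ↦ exp(−C(t_i − t_{i−1})|x|^χ). Then for any function h : ℝ → ℝ and every ε > 0, ℙ(|Σ_{i=1}^n h(t_{i−1})·(X_{t_i} − X_{t_{i−1}})| > ε) ≤ (2^{χ+1} C / ((χ+1) ε^χ)) · Σ_{i=1}^n |h(t_{i−1})|^χ (t_i − t_{i−1}). -/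

import Mathlib

/-!
The weighted sum `S = ∑ cᵢ Yᵢ` of independent increments has characteristic function
`exp (-K |x|^χ)` with `K = C ∑ |cᵢ|^χ Δtᵢ`. The truncation inequality
`P(|S| > ε) ≤ (ε/2) ‖∫_{-2/ε}^{2/ε} (1 - φ_S)‖` together with `0 ≤ 1 - e^{-y} ≤ y`
(the lower bound because `|φ_S| ≤ 1`) reduces the tail to `(ε/2) K ∫_{-2/ε}^{2/ε} |x|^χ dx`.
-/

open MeasureTheory ProbabilityTheory Filter Topology

/-- The characteristic function of a real random variable `Z` on `(Ω, P)`: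
`φ_Z(t) = E[exp(i t Z)]`. -/
noncomputable def charFn {Ω : Type*} [MeasurableSpace Ω] (P : Measure Ω) (Z : Ω → ℝ) (t : ℝ) : ℂ :=
  ∫ ω, Complex.exp (t * Z ω * Complex.I) ∂P

section CharFn

variable {Ω : Type*} [MeasurableSpace Ω] {P : Measure Ω}

lemma charFn_eq_charFun_map {Z : Ω → ℝ} (hZ : AEMeasurable Z P) (t : ℝ) :
    charFn P Z t = charFun (P.map Z) t := by
  rw [charFun_apply_real, integral_map hZ (by fun_prop)]
  rfl

lemma charFn_const_mul (Z : Ω → ℝ) (c t : ℝ) :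
    charFn P (fun ω => c * Z ω) t = charFn P Z (c * t) := by
  simp only [charFn]
  congr! 3
  push_cast
  ring

lemma ProbabilityTheory.iIndepFun.charFn_sum_eq_prod [IsProbabilityMeasure P]
    {ι : Type*} [Fintype ι] {Z : ι → Ω → ℝ} (hZ : ∀ i, AEMeasurable (Z i) P)
    (hind : iIndepFun Z P) (t : ℝ) :
    charFn P (fun ω => ∑ i, Z i ω) t = ∏ i, charFn P (Z i) t := by
  rw [charFn_eq_charFun_map (Finset.aemeasurable_fun_sum _ fun i _ => hZ i),
    hind.charFun_map_fun_sum_eq_prod hZ, Finset.prod_apply]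
  simp_rw [charFn_eq_charFun_map (hZ _)]

lemma ProbabilityTheory.iIndepFun.charFn_weighted_sum_eq_exp [IsProbabilityMeasure P]
    {ι : Type*} [Fintype ι] {Y : ι → Ω → ℝ} (hY : ∀ i, AEMeasurable (Y i) P)
    (hind : iIndepFun Y P) {χ : ℝ} {σ : ι → ℝ}
    (hσ : ∀ i x, charFn P (Y i) x = Real.exp (-(σ i * |x| ^ χ))) (c : ι → ℝ) (x : ℝ) :
    charFn P (fun ω => ∑ i, c i * Y i ω) x
      = Real.exp (-((∑ i, σ i * |c i| ^ χ) * |x| ^ χ)) := by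
  have hind' : iIndepFun (fun i ω => c i * Y i ω) P :=
    hind.comp (fun i y => c i * y) fun i => measurable_const.mul measurable_id
  rw [hind'.charFn_sum_eq_prod (fun i => (hY i).const_mul _)]
  simp_rw [charFn_const_mul, hσ, abs_mul, Real.mul_rpow (abs_nonneg _) (abs_nonneg _)]
  rw [← Complex.ofReal_prod, ← Real.exp_sum, Finset.sum_mul, ← Finset.sum_neg_distrib]
  congr! 4
  ring

end CharFn

lemma integral_abs_rpow_neg_self {χ : ℝ} (hχ : 0 ≤ χ) {u : ℝ} (hu : 0 ≤ u) :
    ∫ x in -u..u, |x| ^ χ = 2 * u ^ (χ + 1) / (χ + 1) := by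
  have hcont : Continuous fun x : ℝ => |x| ^ χ := continuous_abs.rpow_const fun _ => Or.inr hχ
  have hhalf : ∫ x in (0 : ℝ)..u, |x| ^ χ = u ^ (χ + 1) / (χ + 1) := by
    rw [intervalIntegral.integral_congr (g := fun x => x ^ χ) fun x hx => by
        rw [Set.uIcc_of_le hu] at hx; simp only [abs_of_nonneg hx.1],
      integral_rpow (Or.inl (by linarith)), Real.zero_rpow (by linarith), sub_zero]
  have hneg : ∫ x in -u..0, |x| ^ χ = ∫ x in (0 : ℝ)..u, |x| ^ χ := by
    simpa using (intervalIntegral.integral_comp_neg (a := 0) (b := u) fun x => |x| ^ χ).symm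
  rw [← intervalIntegral.integral_add_adjacent_intervals (hcont.intervalIntegrable _ 0)
    (hcont.intervalIntegrable 0 _), hneg, hhalf]
  ring

lemma norm_one_sub_charFun_le_of_charFun_eq_exp {μ : Measure ℝ} [IsProbabilityMeasure μ]
    {t y : ℝ} (hμ : charFun μ t = Real.exp (-y)) : ‖1 - charFun μ t‖ ≤ y := by
  have hexp_le : Real.exp (-y) ≤ 1 := by
    have h1 := norm_charFun_le_one (μ := μ) t
    rwa [hμ, Complex.norm_real, Real.norm_eq_abs, Real.abs_exp] at h1
  rw [hμ, ← Complex.ofReal_one, ← Complex.ofReal_sub, Complex.norm_real, Real.norm_eq_abs,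
    abs_of_nonneg (sub_nonneg.2 hexp_le)]
  linarith [Real.add_one_le_exp (-y)]

lemma measureReal_abs_gt_le_of_charFun_eq_exp {μ : Measure ℝ} [IsProbabilityMeasure μ]
    {K χ : ℝ} (hχ : 0 < χ) (hμ : ∀ t, charFun μ t = Real.exp (-(K * |t| ^ χ)))
    {r : ℝ} (hr : 0 < r) :
    μ.real {x | r < |x|} ≤ 2 ^ (χ + 1) * K / ((χ + 1) * r ^ χ) := by
  set u := 2 * r⁻¹
  have hu : 0 < u := by positivity
  have hcont : Continuous fun t : ℝ => K * |t| ^ χ :=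
    continuous_const.mul (continuous_abs.rpow_const fun _ => Or.inr hχ.le)
  calc μ.real {x | r < |x|}
      ≤ 2⁻¹ * r * ‖∫ t in -u..u, 1 - charFun μ t‖ := by
        simpa only [neg_mul] using measureReal_abs_gt_le_integral_charFun (μ := μ) hr
    _ ≤ 2⁻¹ * r * ∫ t in -u..u, K * |t| ^ χ := by
        gcongr
        exact intervalIntegral.norm_integral_le_of_norm_le (by linarith)
          (ae_of_all _ fun t _ => norm_one_sub_charFun_le_of_charFun_eq_exp (hμ t))
          (hcont.intervalIntegrable _ _)
    _ = 2 ^ (χ + 1) * K / ((χ + 1) * r ^ χ) := by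
        rw [intervalIntegral.integral_const_mul, integral_abs_rpow_neg_self hχ.le hu.le,
          Real.rpow_add_one hu.ne', Real.mul_rpow (by norm_num) (by positivity),
          Real.inv_rpow hr.le, Real.rpow_add_one (by norm_num : (2 : ℝ) ≠ 0)]
        simp only [u]
        field_simp

theorem statement10_general
    {Ω : Type*} [MeasurableSpace Ω] (P : Measure Ω) [IsProbabilityMeasure P]
    (C χ : ℝ) (hχ : χ ∈ Set.Ioc (0 : ℝ) 2)
    (X : ℝ → Ω → ℝ) (hX : ∀ v, Measurable (X v))
    (n : ℕ) (t : Fin (n + 1) → ℝ)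
    (hindep : iIndepFun
      (fun (i : Fin n) ω => X (t i.succ) ω - X (t i.castSucc) ω) P)
    (hchar : ∀ (i : Fin n) (x : ℝ),
      charFn P (fun ω => X (t i.succ) ω - X (t i.castSucc) ω) x
        = (Real.exp (-(C * (t i.succ - t i.castSucc) * |x| ^ χ)) : ℂ))
    (h : ℝ → ℝ) :
    ∀ ε > (0 : ℝ),
      P {ω | ε < |∑ i : Fin n, h (t i.castSucc) * (X (t i.succ) ω - X (t i.castSucc) ω)|}
        ≤ ENNReal.ofReal (2 ^ (χ + 1) * C / ((χ + 1) * ε ^ χ)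
            * ∑ i : Fin n, |h (t i.castSucc)| ^ χ * (t i.succ - t i.castSucc)) := by
  intro ε hε
  set S : Ω → ℝ := fun ω =>
    ∑ i : Fin n, h (t i.castSucc) * (X (t i.succ) ω - X (t i.castSucc) ω)
  have hS : Measurable S := by fun_prop
  have := Measure.isProbabilityMeasure_map (μ := P) hS.aemeasurable
  have hcharS (x : ℝ) : charFun (P.map S) x = Real.exp (-((C * ∑ i : Fin n,
      |h (t i.castSucc)| ^ χ * (t i.succ - t i.castSucc)) * |x| ^ χ)) := by
    rw [← charFn_eq_charFun_map hS.aemeasurable]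
    refine (hindep.charFn_weighted_sum_eq_exp
      (fun i => ((hX _).sub (hX _)).aemeasurable) hchar _ x).trans ?_
    rw [Finset.mul_sum]
    congr! 5
    ring
  calc P {ω | ε < |S ω|} = P.map S {x | ε < |x|} :=
        (Measure.map_apply hS (measurableSet_lt measurable_const measurable_abs)).symm
    _ = ENNReal.ofReal ((P.map S).real {x | ε < |x|}) := (ofReal_measureReal).symm
    _ ≤ _ := ENNReal.ofReal_le_ofReal <|
        (measureReal_abs_gt_le_of_charFun_eq_exp hχ.1 hcharS hε).trans_eq (by ring)

/-- Discretized form of the paper's tail bound Lemma 3.1: if the increments of `X` over a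
partition `a = t₀ < t₁ < ⋯ < t_n = b` are independent with symmetric `χ`-stable characteristic
functions `exp(-C (t_i - t_{i-1}) |x|^χ)`, then for every `ε > 0`,
`P(|Σ h(t_{i-1})·(X_{t_i} - X_{t_{i-1}})| > ε)
  ≤ (2^{χ+1} C / ((χ+1) ε^χ)) Σ |h(t_{i-1})|^χ (t_i - t_{i-1})`. -/
theorem statement10
    {Ω : Type*} [MeasurableSpace Ω] (P : Measure Ω) [IsProbabilityMeasure P]
    (C χ : ℝ) (hC : 0 < C) (hχ : χ ∈ Set.Ioc (0 : ℝ) 2)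
    (X : ℝ → Ω → ℝ) (hX : ∀ v, Measurable (X v))
    (a b : ℝ) (n : ℕ) (hn : 0 < n) (t : Fin (n + 1) → ℝ)
    (ht : StrictMono t) (ht0 : t 0 = a) (htn : t (Fin.last n) = b)
    (hindep : iIndepFun
      (fun (i : Fin n) ω => X (t i.succ) ω - X (t i.castSucc) ω) P)
    (hchar : ∀ (i : Fin n) (x : ℝ),
      charFn P (fun ω => X (t i.succ) ω - X (t i.castSucc) ω) x
        = (Real.exp (-(C * (t i.succ - t i.castSucc) * |x| ^ χ)) : ℂ))
    (h : ℝ → ℝ) :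
    ∀ ε > (0 : ℝ),
      P {ω | ε < |∑ i : Fin n, h (t i.castSucc) * (X (t i.succ) ω - X (t i.castSucc) ω)|}
        ≤ ENNReal.ofReal (2 ^ (χ + 1) * C / ((χ + 1) * ε ^ χ)
            * ∑ i : Fin n, |h (t i.castSucc)| ^ χ * (t i.succ - t i.castSucc)) :=
  statement10_general P C χ hχ X hX n t hindep hchar h
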